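/- Let d = 1, let μ = (μ_t) be a curve in P₂(ℝ), and let Γ be a law on C([0,1], ℝ) with time marginals μ_t such that for every pair s < t, the joint law of (γ(s), γ(t)) under Γ is the quantile coupling of μ_s and μ_t. Then A(Γ) = E(μ): the action of Γ equals the Wasserstein energy of the marginal curve. -/

import Mathlib

/-!
In dimension one the quantile coupling is an optimal plan. Writing
`x * y = ∬ (𝟙{s < x} - 𝟙{s < 0}) (𝟙{t < y} - 𝟙{t < 0}) ds dt` and integrating against a coupling
`π` of `μ` and `ν` shows that `∫ x y dπ` depends on `π` only through its joint survival function
`π (Ioi s ×ˢ Ioi t)`, which is largest, namely `min (μ (Ioi s)) (ν (Ioi t))`, for the quantile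
coupling. Hence the two-time marginals of `Γ` realise `W₂(μ_s, μ_t)²`, and the `Γ`-integral of
every energy sum of the paths is the corresponding energy sum of the curve `μ`.

For a continuous path the energy is the increasing limit of its energy sums along the dyadic
partitions: refining a partition increases energy sums (triangle inequality and Cauchy–Schwarz),
and the energy sum of any partition is the limit of those of its roundings to the dyadic grids.
Monotone convergence then lets the supremum over partitions commute with the integral over `Γ`.
-/

open Set MeasureTheory Filter
open scoped ENNReal

/-- `π` is a coupling of `μ` and `ν`. -/
def IsCoupling {E : Type*} [MeasurableSpace E] (π : Measure (E × E)) (μ ν : Measure E) : Prop :=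
  π.map Prod.fst = μ ∧ π.map Prod.snd = ν

/-- The quadratic transport cost `∫ ‖y - x‖² dπ(x,y)` of a plan `π`. -/
noncomputable def transportCost {E : Type*} [NormedAddCommGroup E] [MeasurableSpace E]
    (π : Measure (E × E)) : ℝ≥0∞ :=
  ∫⁻ p, ENNReal.ofReal (‖p.2 - p.1‖ ^ 2) ∂π

/-- The squared 2-Wasserstein distance: infimum of the quadratic cost over all couplings. -/
noncomputable def W2sq {E : Type*} [NormedAddCommGroup E] [MeasurableSpace E]
    (μ ν : Measure E) : ℝ≥0∞ :=
  ⨅ (π : Measure (E × E)) (_ : IsCoupling π μ ν), transportCost π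

/-- Energy sum of a curve along the partition points `r 0 < r 1 < ... < r (m+1)`. -/
noncomputable def energySum {X : Type*} [MetricSpace X] (γ : ℝ → X) {m : ℕ}
    (r : Fin (m + 2) → ℝ) : ℝ :=
  ∑ k : Fin (m + 1), dist (γ (r k.castSucc)) (γ (r k.succ)) ^ 2 / (r k.succ - r k.castSucc)

/-- `r` enumerates a partition `0 = r 0 < r 1 < ... < r (m+1) = 1` of `[0, 1]`. -/
def IsPartition {m : ℕ} (r : Fin (m + 2) → ℝ) : Prop :=
  StrictMono r ∧ r 0 = 0 ∧ r (Fin.last (m + 1)) = 1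

/-- The energy of a curve on `[0,1]`: supremum of the energy sums over all partitions. -/
noncomputable def energy {X : Type*} [MetricSpace X] (γ : ℝ → X) : ℝ≥0∞ :=
  ⨆ (m : ℕ) (r : Fin (m + 2) → ℝ) (_ : IsPartition r), ENNReal.ofReal (energySum γ r)

/-- The energy of a curve of measures in the Wasserstein space `(P₂, W₂)`. -/
noncomputable def energyW2 {E : Type*} [NormedAddCommGroup E] [MeasurableSpace E]
    (μ : ℝ → MeasureTheory.Measure E) : ℝ≥0∞ :=
  ⨆ (m : ℕ) (r : Fin (m + 2) → ℝ) (_ : IsPartition r),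
    ∑ k : Fin (m + 1),
      W2sq (μ (r k.castSucc)) (μ (r k.succ)) / ENNReal.ofReal (r k.succ - r k.castSucc)

/-- The cumulative distribution function of a measure on ℝ. -/
noncomputable def cdf (μ : MeasureTheory.Measure ℝ) (x : ℝ) : ℝ := (μ (Set.Iic x)).toReal

/-- The quantile function (generalized inverse of the cdf) of a measure on ℝ. -/
noncomputable def qf (μ : MeasureTheory.Measure ℝ) (u : ℝ) : ℝ := sInf {x : ℝ | u ≤ cdf μ x}

/-- The quantile coupling of two measures on ℝ: the joint law of
`(F_μ⁻¹(U), F_ν⁻¹(U))` for `U` uniform on `(0,1)`. -/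
noncomputable def quantileCoupling (μ ν : MeasureTheory.Measure ℝ) :
    MeasureTheory.Measure (ℝ × ℝ) :=
  ((MeasureTheory.volume : MeasureTheory.Measure ℝ).restrict (Set.Ioo 0 1)).map
    (fun u => (qf μ u, qf ν u))

open scoped Topology

namespace MeasureTheory.Measure

theorem ext_of_Ioi_of_isProbabilityMeasure {μ ν : Measure ℝ} [IsProbabilityMeasure μ]
    [IsProbabilityMeasure ν] (h : ∀ s, μ (Ioi s) = ν (Ioi s)) : μ = ν :=
  ext_of_Iic μ ν fun x => by
    rw [← compl_Ioi, prob_compl_eq_one_sub measurableSet_Ioi,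
      prob_compl_eq_one_sub measurableSet_Ioi, h]

end MeasureTheory.Measure

section Quantile

variable {μ ν : Measure ℝ} [IsProbabilityMeasure μ] [IsProbabilityMeasure ν]

theorem cdf_eq_probabilityCdf (x : ℝ) : cdf μ x = ProbabilityTheory.cdf μ x :=
  (ProbabilityTheory.cdf_eq_real μ x).symm

theorem measure_Ioi_eq_ofReal_one_sub_cdf (x : ℝ) :
    μ (Ioi x) = ENNReal.ofReal (1 - cdf μ x) := by
  rw [← compl_Iic, prob_compl_eq_one_sub measurableSet_Iic, cdf_eq_probabilityCdf,
    ← ProbabilityTheory.ofReal_cdf, ENNReal.ofReal_sub _ (ProbabilityTheory.cdf_nonneg μ x),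
    ENNReal.ofReal_one]

theorem qf_le_iff {u x : ℝ} (hu : u ∈ Ioo (0 : ℝ) 1) : qf μ u ≤ x ↔ u ≤ cdf μ x := by
  have hne : {y | u ≤ cdf μ y}.Nonempty := by
    simp only [cdf_eq_probabilityCdf]
    exact ((ProbabilityTheory.tendsto_cdf_atTop μ).eventually (eventually_ge_nhds hu.2)).exists
  have hbdd : BddBelow {y | u ≤ cdf μ y} := by
    obtain ⟨y₀, hy₀⟩ :=
      ((ProbabilityTheory.tendsto_cdf_atBot μ).eventually (eventually_lt_nhds hu.1)).exists
    refine ⟨y₀, fun y hy => le_of_not_gt fun hyy₀ => ?_⟩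
    have : cdf μ y ≤ cdf μ y₀ := by
      simp only [cdf_eq_probabilityCdf]; exact ProbabilityTheory.monotone_cdf μ hyy₀.le
    exact (hy.trans this).not_gt (by rwa [cdf_eq_probabilityCdf])
  refine ⟨fun h => ?_, fun h => csInf_le hbdd h⟩
  -- the cdf is right-continuous, so the set `{y | u ≤ cdf μ y}` contains its infimum
  have hright : Tendsto (cdf μ) (𝓝[>] x) (𝓝 (cdf μ x)) := by
    simp only [funext (cdf_eq_probabilityCdf (μ := μ))]
    exact ((ProbabilityTheory.cdf μ).right_continuous x).tendsto.mono_left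
      (nhdsWithin_mono _ Ioi_subset_Ici_self)
  refine ge_of_tendsto hright (eventually_nhdsWithin_of_forall fun y (hy : x < y) => ?_)
  obtain ⟨z, hz, hzy⟩ := (csInf_lt_iff hbdd hne).1 (h.trans_lt hy)
  refine hz.trans ?_
  simp only [cdf_eq_probabilityCdf]
  exact ProbabilityTheory.monotone_cdf μ hzy.le

theorem monotoneOn_qf : MonotoneOn (qf μ) (Ioo 0 1) := fun _ hu _ hv huv =>
  (qf_le_iff hu).2 (huv.trans ((qf_le_iff hv).1 le_rfl))

theorem aemeasurable_qf : AEMeasurable (qf μ) (volume.restrict (Ioo 0 1)) :=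
  aemeasurable_restrict_of_monotoneOn measurableSet_Ioo monotoneOn_qf

theorem qf_preimage_Ioi_inter_Ioo (x : ℝ) :
    qf μ ⁻¹' Ioi x ∩ Ioo 0 1 = Ioo (cdf μ x) 1 := by
  ext u
  simp only [mem_inter_iff, mem_preimage, mem_Ioi, mem_Ioo]
  constructor
  · rintro ⟨hx, hu⟩
    exact ⟨lt_of_not_ge fun h => hx.not_ge ((qf_le_iff hu).2 h), hu.2⟩
  · rintro ⟨hx, hu⟩
    have hu' : u ∈ Ioo (0 : ℝ) 1 := ⟨ENNReal.toReal_nonneg.trans_lt hx, hu⟩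
    exact ⟨lt_of_not_ge fun h => hx.not_ge ((qf_le_iff hu').1 h), hu'⟩

instance : IsProbabilityMeasure (volume.restrict (Ioo (0 : ℝ) 1)) :=
  ⟨by simp [Real.volume_Ioo]⟩

theorem map_qf : (volume.restrict (Ioo 0 1)).map (qf μ) = μ := by
  have : IsProbabilityMeasure ((volume.restrict (Ioo 0 1)).map (qf μ)) :=
    Measure.isProbabilityMeasure_map aemeasurable_qf
  refine Measure.ext_of_Ioi_of_isProbabilityMeasure fun x => ?_
  rw [Measure.map_apply_of_aemeasurable aemeasurable_qf measurableSet_Ioi,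
    Measure.restrict_apply' measurableSet_Ioo, qf_preimage_Ioi_inter_Ioo, Real.volume_Ioo,
    measure_Ioi_eq_ofReal_one_sub_cdf]

theorem isCoupling_quantileCoupling : IsCoupling (quantileCoupling μ ν) μ ν := by
  constructor
  · rw [quantileCoupling, AEMeasurable.map_map_of_aemeasurable measurable_fst.aemeasurable
      (aemeasurable_qf.prodMk aemeasurable_qf)]
    exact map_qf
  · rw [quantileCoupling, AEMeasurable.map_map_of_aemeasurable measurable_snd.aemeasurable
      (aemeasurable_qf.prodMk aemeasurable_qf)]
    exact map_qf

theorem quantileCoupling_Ioi_prod_Ioi (s t : ℝ) :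
    quantileCoupling μ ν (Ioi s ×ˢ Ioi t) = min (μ (Ioi s)) (ν (Ioi t)) := by
  rw [quantileCoupling,
    Measure.map_apply_of_aemeasurable (aemeasurable_qf.prodMk aemeasurable_qf)
      (measurableSet_Ioi.prod measurableSet_Ioi), Measure.restrict_apply' measurableSet_Ioo,
    mk_preimage_prod, inter_inter_distrib_right, qf_preimage_Ioi_inter_Ioo,
    qf_preimage_Ioi_inter_Ioo, Ioo_inter_Ioo, Real.volume_Ioo, measure_Ioi_eq_ofReal_one_sub_cdf,
    measure_Ioi_eq_ofReal_one_sub_cdf, ← ENNReal.ofReal_min, min_self, min_sub_sub_left]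

end Quantile

section SignedLayer

noncomputable def signedLayer (s x : ℝ) : ℝ := (Ioi s).indicator 1 x - (Ioi s).indicator 1 0

theorem signedLayer_of_nonneg {x : ℝ} (hx : 0 ≤ x) :
    (signedLayer · x) = (Ico 0 x).indicator 1 := by
  ext s
  simp only [signedLayer, indicator_apply, mem_Ioi, mem_Ico, Pi.one_apply]
  split_ifs <;> grind

theorem signedLayer_of_nonpos {x : ℝ} (hx : x ≤ 0) :
    (signedLayer · x) = -(Ico x 0).indicator 1 := by
  ext s
  simp only [signedLayer, indicator_apply, mem_Ioi, mem_Ico, Pi.one_apply, Pi.neg_apply]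
  split_ifs <;> grind

theorem abs_signedLayer (s x : ℝ) :
    |signedLayer s x| = (Ico (min 0 x) (max 0 x)).indicator 1 s := by
  have hind : ∀ a b : ℝ, |(Ico a b).indicator (1 : ℝ → ℝ) s| = (Ico a b).indicator 1 s :=
    fun _ _ => abs_of_nonneg (indicator_nonneg (fun _ _ => zero_le_one) s)
  rcases le_total 0 x with hx | hx
  · rw [min_eq_left hx, max_eq_right hx, congrFun (signedLayer_of_nonneg hx) s, hind]
  · rw [min_eq_right hx, max_eq_left hx, congrFun (signedLayer_of_nonpos hx) s, Pi.neg_apply,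
      abs_neg, hind]

theorem integrable_signedLayer (x : ℝ) : Integrable (signedLayer · x) := by
  rcases le_total 0 x with hx | hx
  · rw [signedLayer_of_nonneg hx]
    exact (integrable_indicator_iff measurableSet_Ico).2
      (integrableOn_const measure_Ico_lt_top.ne)
  · rw [signedLayer_of_nonpos hx]
    exact ((integrable_indicator_iff measurableSet_Ico).2
      (integrableOn_const measure_Ico_lt_top.ne)).neg

theorem integral_signedLayer (x : ℝ) : ∫ s, signedLayer s x = x := by
  rcases le_total 0 x with hx | hx
  · rw [signedLayer_of_nonneg hx, integral_indicator_one measurableSet_Ico, measureReal_def,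
      Real.volume_Ico, ENNReal.toReal_ofReal (by linarith), sub_zero]
  · rw [signedLayer_of_nonpos hx, integral_neg', integral_indicator_one measurableSet_Ico,
      measureReal_def, Real.volume_Ico, ENNReal.toReal_ofReal (by linarith), zero_sub, neg_neg]

theorem integral_abs_signedLayer (x : ℝ) : ∫ s, |signedLayer s x| = |x| := by
  simp only [abs_signedLayer]
  rw [integral_indicator_one measurableSet_Ico, measureReal_def, Real.volume_Ico,
    ENNReal.toReal_ofReal (sub_nonneg.2 min_le_max), max_sub_min_eq_abs, sub_zero]

theorem measurable_signedLayer : Measurable (Function.uncurry signedLayer) := by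
  have h : ∀ f : ℝ × ℝ → ℝ, Measurable f →
      Measurable fun q : ℝ × ℝ => (Ioi q.1).indicator (1 : ℝ → ℝ) (f q) := fun f hf => by
    simp only [indicator_apply, mem_Ioi, Pi.one_apply]
    exact Measurable.ite (measurableSet_lt measurable_fst hf) measurable_const measurable_const
  exact (h _ measurable_snd).sub (h _ measurable_const)

end SignedLayer

section Comparison

variable {π π' : Measure (ℝ × ℝ)} {μ ν : Measure ℝ}

theorem integral_signedLayer_mul_signedLayer (x y : ℝ) :
    ∫ st : ℝ × ℝ, signedLayer st.1 x * signedLayer st.2 y = x * y := by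
  rw [Measure.volume_eq_prod, integral_prod_mul (signedLayer · x) (signedLayer · y),
    integral_signedLayer, integral_signedLayer]

theorem integrable_signedLayer_mul_signedLayer [SFinite π]
    (h : Integrable (fun p : ℝ × ℝ => p.1 * p.2) π) :
    Integrable (fun q : (ℝ × ℝ) × (ℝ × ℝ) => signedLayer q.2.1 q.1.1 * signedLayer q.2.2 q.1.2)
      (π.prod volume) := by
  have hmeas : Measurable fun q : (ℝ × ℝ) × (ℝ × ℝ) =>
      signedLayer q.2.1 q.1.1 * signedLayer q.2.2 q.1.2 :=
    (measurable_signedLayer.comp (measurable_snd.fst.prodMk measurable_fst.fst)).mul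
    (measurable_signedLayer.comp (measurable_snd.snd.prodMk measurable_fst.snd))
  refine (integrable_prod_iff hmeas.aestronglyMeasurable).2 ⟨ae_of_all _ fun p => ?_, ?_⟩
  · rw [Measure.volume_eq_prod]
    exact (integrable_signedLayer p.1).mul_prod (integrable_signedLayer p.2)
  · refine h.norm.congr (ae_of_all _ fun p => ?_)
    simp only [Real.norm_eq_abs, abs_mul]
    rw [Measure.volume_eq_prod, integral_prod_mul (fun s => |signedLayer s p.1|)
      (fun t => |signedLayer t p.2|), integral_abs_signedLayer, integral_abs_signedLayer]

theorem integral_mul_eq_integral_integral_signedLayer [SFinite π]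
    (h : Integrable (fun p : ℝ × ℝ => p.1 * p.2) π) :
    ∫ p, p.1 * p.2 ∂π = ∫ st : ℝ × ℝ, ∫ p, signedLayer st.1 p.1 * signedLayer st.2 p.2 ∂π := by
  calc ∫ p, p.1 * p.2 ∂π
      = ∫ p : ℝ × ℝ, (∫ st : ℝ × ℝ, signedLayer st.1 p.1 * signedLayer st.2 p.2) ∂π :=
        integral_congr_ae <| ae_of_all _ fun p =>
          (integral_signedLayer_mul_signedLayer p.1 p.2).symm
    _ = _ := integral_integral_swap (integrable_signedLayer_mul_signedLayer h)

theorem integral_signedLayer_mul_signedLayer_of_isCoupling [IsProbabilityMeasure π]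
    (hπ : IsCoupling π μ ν) (s t : ℝ) :
    ∫ p, signedLayer s p.1 * signedLayer t p.2 ∂π
      = π.real (Ioi s ×ˢ Ioi t) - (Ioi t).indicator 1 0 * μ.real (Ioi s)
        - (Ioi s).indicator 1 0 * ν.real (Ioi t)
        + (Ioi s).indicator 1 0 * (Ioi t).indicator 1 0 := by
  set a : ℝ := (Ioi s).indicator 1 0
  set b : ℝ := (Ioi t).indicator 1 0
  have hint : ∀ {A : Set (ℝ × ℝ)}, MeasurableSet A → Integrable (A.indicator 1) π :=
    fun hA => (integrable_const (1 : ℝ)).indicator hA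
  have hA : MeasurableSet (Ioi s ×ˢ Ioi t) := measurableSet_Ioi.prod measurableSet_Ioi
  have hB : MeasurableSet (Prod.fst ⁻¹' Ioi s : Set (ℝ × ℝ)) := measurable_fst measurableSet_Ioi
  have hC : MeasurableSet (Prod.snd ⁻¹' Ioi t : Set (ℝ × ℝ)) := measurable_snd measurableSet_Ioi
  have hexpand : ∀ p : ℝ × ℝ, signedLayer s p.1 * signedLayer t p.2
      = (Ioi s ×ˢ Ioi t).indicator 1 p - b * (Prod.fst ⁻¹' Ioi s).indicator 1 p
        - a * (Prod.snd ⁻¹' Ioi t).indicator 1 p + a * b := fun p => by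
    simp only [signedLayer, a, b, indicator_apply, mem_prod]
    split_ifs <;> simp_all
  simp only [hexpand]
  rw [integral_add, integral_sub, integral_sub, integral_const_mul, integral_const_mul,
    integral_indicator_one hA, integral_indicator_one hB, integral_indicator_one hC,
    integral_const, probReal_univ, one_smul, ← hπ.1, ← hπ.2,
    map_measureReal_apply measurable_fst measurableSet_Ioi,
    map_measureReal_apply measurable_snd measurableSet_Ioi]
  · exact hint hA
  · exact (hint hB).const_mul b
  · exact (hint hA).sub ((hint hB).const_mul b)
  · exact (hint hC).const_mul a
  · exact ((hint hA).sub ((hint hB).const_mul b)).sub ((hint hC).const_mul a)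
  · exact integrable_const _

theorem integral_mul_le_of_measure_Ioi_prod_Ioi_le [IsProbabilityMeasure π]
    [IsProbabilityMeasure π'] (hπ : IsCoupling π μ ν) (hπ' : IsCoupling π' μ ν)
    (h : Integrable (fun p : ℝ × ℝ => p.1 * p.2) π)
    (h' : Integrable (fun p : ℝ × ℝ => p.1 * p.2) π')
    (hle : ∀ s t, π (Ioi s ×ˢ Ioi t) ≤ π' (Ioi s ×ˢ Ioi t)) :
    ∫ p, p.1 * p.2 ∂π ≤ ∫ p, p.1 * p.2 ∂π' := by
  rw [integral_mul_eq_integral_integral_signedLayer h,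
    integral_mul_eq_integral_integral_signedLayer h']
  refine integral_mono (integrable_signedLayer_mul_signedLayer h).integral_prod_right
    (integrable_signedLayer_mul_signedLayer h').integral_prod_right fun st => ?_
  simp only [integral_signedLayer_mul_signedLayer_of_isCoupling hπ,
    integral_signedLayer_mul_signedLayer_of_isCoupling hπ']
  gcongr
  exact ENNReal.toReal_mono (measure_ne_top _ _) (hle st.1 st.2)

end Comparison

namespace IsCoupling

variable {E : Type*} [MeasurableSpace E] {π : Measure (E × E)} {μ ν : Measure E}

theorem isProbabilityMeasure [IsProbabilityMeasure μ] (hπ : IsCoupling π μ ν) :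
    IsProbabilityMeasure π :=
  ⟨by rw [← preimage_univ (f := Prod.fst), ← Measure.map_apply measurable_fst MeasurableSet.univ,
    hπ.1, measure_univ]⟩

theorem integrable_comp_fst {f : E → ℝ} (hπ : IsCoupling π μ ν) (hf : Integrable f μ) :
    Integrable (fun p => f p.1) π := by
  rw [← hπ.1] at hf
  exact hf.comp_measurable measurable_fst

theorem integrable_comp_snd {f : E → ℝ} (hπ : IsCoupling π μ ν) (hf : Integrable f ν) :
    Integrable (fun p => f p.2) π := by
  rw [← hπ.2] at hf
  exact hf.comp_measurable measurable_snd

theorem integral_comp_fst {f : E → ℝ} (hπ : IsCoupling π μ ν) (hf : Measurable f) :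
    ∫ p, f p.1 ∂π = ∫ x, f x ∂μ := by
  rw [← hπ.1, integral_map measurable_fst.aemeasurable hf.aestronglyMeasurable]

theorem integral_comp_snd {f : E → ℝ} (hπ : IsCoupling π μ ν) (hf : Measurable f) :
    ∫ p, f p.2 ∂π = ∫ x, f x ∂ν := by
  rw [← hπ.2, integral_map measurable_snd.aemeasurable hf.aestronglyMeasurable]

end IsCoupling

section Optimality

variable {π : Measure (ℝ × ℝ)} {μ ν : Measure ℝ}

theorem IsCoupling.integrable_mul (hπ : IsCoupling π μ ν) (hμ : Integrable (fun x => x ^ 2) μ)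
    (hν : Integrable (fun y => y ^ 2) ν) : Integrable (fun p : ℝ × ℝ => p.1 * p.2) π := by
  refine ((hπ.integrable_comp_fst hμ).add (hπ.integrable_comp_snd hν)).mono'
    (measurable_fst.mul measurable_snd).aestronglyMeasurable (ae_of_all _ fun p => ?_)
  rw [Real.norm_eq_abs, abs_mul, Pi.add_apply]
  nlinarith [sq_nonneg (|p.1| - |p.2|), sq_abs p.1, sq_abs p.2, abs_nonneg p.1, abs_nonneg p.2]

theorem IsCoupling.transportCost_eq (hπ : IsCoupling π μ ν) (hμ : Integrable (fun x => x ^ 2) μ)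
    (hν : Integrable (fun y => y ^ 2) ν) :
    transportCost π
      = ENNReal.ofReal (∫ x, x ^ 2 ∂μ + ∫ y, y ^ 2 ∂ν - 2 * ∫ p, p.1 * p.2 ∂π) := by
  have h1 := hπ.integrable_comp_fst hμ
  have h2 := hπ.integrable_comp_snd hν
  have h1add2 : Integrable (fun p : ℝ × ℝ => p.1 ^ 2 + p.2 ^ 2) π := h1.add h2
  have h12 := (hπ.integrable_mul hμ hν).const_mul 2
  have hexpand : ∀ p : ℝ × ℝ, ‖p.2 - p.1‖ ^ 2 = p.1 ^ 2 + p.2 ^ 2 - 2 * (p.1 * p.2) :=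
    fun p => by rw [Real.norm_eq_abs, sq_abs]; ring
  rw [transportCost, ← ofReal_integral_eq_lintegral_ofReal _ (ae_of_all _ fun p => by positivity)]
  · simp only [hexpand]
    rw [integral_sub h1add2 h12, integral_add h1 h2, integral_const_mul,
      hπ.integral_comp_fst (f := fun x => x ^ 2) (by fun_prop),
      hπ.integral_comp_snd (f := fun x => x ^ 2) (by fun_prop)]
  · simp only [hexpand]
    exact h1add2.sub h12

variable [IsProbabilityMeasure μ] [IsProbabilityMeasure ν]

theorem IsCoupling.integral_mul_le_quantileCoupling (hπ : IsCoupling π μ ν)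
    (hμ : Integrable (fun x => x ^ 2) μ) (hν : Integrable (fun y => y ^ 2) ν) :
    ∫ p, p.1 * p.2 ∂π ≤ ∫ p, p.1 * p.2 ∂(quantileCoupling μ ν) := by
  have hq := isCoupling_quantileCoupling (μ := μ) (ν := ν)
  have := hπ.isProbabilityMeasure
  have := hq.isProbabilityMeasure
  refine integral_mul_le_of_measure_Ioi_prod_Ioi_le hπ hq (hπ.integrable_mul hμ hν)
    (hq.integrable_mul hμ hν) fun s t => ?_
  rw [quantileCoupling_Ioi_prod_Ioi, ← hπ.1, ← hπ.2,
    Measure.map_apply measurable_fst measurableSet_Ioi,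
    Measure.map_apply measurable_snd measurableSet_Ioi]
  exact le_min (measure_mono fun p hp => hp.1) (measure_mono fun p hp => hp.2)

theorem W2sq_eq_transportCost_quantileCoupling (hμ : Integrable (fun x => x ^ 2) μ)
    (hν : Integrable (fun y => y ^ 2) ν) :
    W2sq μ ν = transportCost (quantileCoupling μ ν) := by
  refine le_antisymm (iInf₂_le (quantileCoupling μ ν) isCoupling_quantileCoupling)
    (le_iInf₂ fun π hπ => ?_)
  rw [hπ.transportCost_eq hμ hν, isCoupling_quantileCoupling.transportCost_eq hμ hν]
  exact ENNReal.ofReal_le_ofReal (by linarith [hπ.integral_mul_le_quantileCoupling hμ hν])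

end Optimality

section EnergySum

variable {X : Type*} [MetricSpace X]

theorem dist_sq_div_le_sum_Ico (x : ℕ → X) {τ : ℕ → ℝ} (hτ : StrictMono τ) {a b : ℕ}
    (hab : a < b) :
    dist (x a) (x b) ^ 2 / (τ b - τ a)
      ≤ ∑ i ∈ Finset.Ico a b, dist (x i) (x (i + 1)) ^ 2 / (τ (i + 1) - τ i) := by
  have htel : ∑ i ∈ Finset.Ico a b, (τ (i + 1) - τ i) = τ b - τ a := by
    rw [Finset.sum_Ico_eq_sub _ hab.le, Finset.sum_range_sub, Finset.sum_range_sub]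
    ring
  calc dist (x a) (x b) ^ 2 / (τ b - τ a)
      ≤ (∑ i ∈ Finset.Ico a b, dist (x i) (x (i + 1))) ^ 2
          / ∑ i ∈ Finset.Ico a b, (τ (i + 1) - τ i) := by
        rw [htel]
        gcongr
        · exact sub_nonneg.2 (hτ hab).le
        · exact dist_le_Ico_sum_dist x hab.le
    _ ≤ _ := Finset.sq_sum_div_le_sum_sq_div _ _ fun i _ => sub_pos.2 (hτ i.lt_succ_self)

theorem energySum_eq_sum_range (γ : ℝ → X) (τ : ℕ → ℝ) (m : ℕ) :
    energySum γ (fun i : Fin (m + 2) => τ i)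
      = ∑ i ∈ Finset.range (m + 1), dist (γ (τ i)) (γ (τ (i + 1))) ^ 2 / (τ (i + 1) - τ i) := by
  rw [energySum, ← Fin.sum_univ_eq_sum_range]
  rfl

theorem energySum_comp_le (γ : ℝ → X) {τ : ℕ → ℝ} (hτ : StrictMono τ) {m M : ℕ}
    {k : Fin (m + 2) → ℕ} (hk : StrictMono k) (h0 : k 0 = 0)
    (hlast : k (Fin.last (m + 1)) = M + 1) :
    energySum γ (fun j => τ (k j)) ≤ energySum γ (fun i : Fin (M + 2) => τ i) := by
  set S : ℕ → ℝ := fun n =>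
    ∑ i ∈ Finset.range n, dist (γ (τ i)) (γ (τ (i + 1))) ^ 2 / (τ (i + 1) - τ i)
  calc energySum γ (fun j => τ (k j))
      ≤ ∑ j : Fin (m + 1), (S (k j.succ) - S (k j.castSucc)) := by
        refine Finset.sum_le_sum fun j _ => ?_
        rw [← Finset.sum_Ico_eq_sub _ (hk j.castSucc_lt_succ).le]
        exact dist_sq_div_le_sum_Ico (γ ∘ τ) hτ (hk j.castSucc_lt_succ)
    _ = S (M + 1) := by
        have h := Fin.sum_Iic_sub (Fin.last m) (S ∘ k)
        rw [← Fin.top_eq_last, Finset.Iic_top, Fin.top_eq_last, Fin.succ_last] at h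
        simpa [S, hlast, h0] using h
    _ = _ := (energySum_eq_sum_range γ τ M).symm

end EnergySum

section Dyadic

variable {X : Type*} [MetricSpace X]

noncomputable def dyadicPartition (n : ℕ) : Fin (2 ^ n - 1 + 2) → ℝ := fun i => (i : ℝ) / 2 ^ n

theorem two_pow_sub_one_add_one (n : ℕ) : 2 ^ n - 1 + 1 = 2 ^ n :=
  Nat.sub_add_cancel Nat.one_le_two_pow

theorem strictMono_div_two_pow (n : ℕ) : StrictMono fun i : ℕ => (i : ℝ) / 2 ^ n :=
  fun _ _ h => div_lt_div_of_pos_right (Nat.cast_lt.2 h) (by positivity)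

theorem isPartition_dyadicPartition (n : ℕ) : IsPartition (dyadicPartition n) := by
  refine ⟨fun i j hij => strictMono_div_two_pow n hij, by simp [dyadicPartition], ?_⟩
  simp only [dyadicPartition, Fin.val_last, two_pow_sub_one_add_one]
  push_cast
  exact div_self (by positivity)

theorem monotone_energySum_dyadicPartition (γ : ℝ → X) :
    Monotone fun n => energySum γ (dyadicPartition n) := by
  refine monotone_nat_of_le_succ fun n => ?_
  have hk : StrictMono fun j : Fin (2 ^ n - 1 + 2) => 2 * (j : ℕ) :=
    fun i j hij => by simpa using Fin.lt_def.1 hij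
  have hlast : 2 * (Fin.last (2 ^ n - 1 + 1) : ℕ) = 2 ^ (n + 1) - 1 + 1 := by
    rw [Fin.val_last, two_pow_sub_one_add_one, two_pow_sub_one_add_one, pow_succ, mul_comm]
  have hcoarse : (fun j : Fin (2 ^ n - 1 + 2) => ((2 * (j : ℕ) : ℕ) : ℝ) / 2 ^ (n + 1))
      = dyadicPartition n := by
    ext j
    simp only [dyadicPartition, pow_succ]
    push_cast
    field_simp
  have key := energySum_comp_le γ (strictMono_div_two_pow (n + 1)) hk rfl hlast
  rwa [hcoarse] at key

end Dyadic

section Approximation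

variable {X : Type*} [MetricSpace X]

theorem tendsto_energySum {ι : Type*} {l : Filter ι} {γ : ℝ → X} {s : Set ℝ}
    (hγ : ContinuousOn γ s) {m : ℕ} {r : Fin (m + 2) → ℝ} (hr : StrictMono r)
    (hrs : ∀ j, r j ∈ s) {R : ι → Fin (m + 2) → ℝ}
    (hR : ∀ j, Tendsto (fun i => R i j) l (𝓝 (r j))) (hRs : ∀ i j, R i j ∈ s) :
    Tendsto (fun i => energySum γ (R i)) l (𝓝 (energySum γ r)) := by
  have hγR : ∀ j, Tendsto (fun i => γ (R i j)) l (𝓝 (γ (r j))) := fun j =>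
    (hγ _ (hrs j)).tendsto.comp
      (tendsto_nhdsWithin_iff.2 ⟨hR j, Eventually.of_forall fun i => hRs i j⟩)
  refine tendsto_finsetSum _ fun j _ => ?_
  exact (((hγR _).dist (hγR _)).pow 2).div ((hR _).sub (hR _))
    (sub_ne_zero.2 (hr j.castSucc_lt_succ).ne')

theorem ofReal_energySum_le_iSup_dyadicPartition {γ : ℝ → X} (hγ : ContinuousOn γ (Icc 0 1))
    {m : ℕ} {r : Fin (m + 2) → ℝ} (hr : IsPartition r) :
    ENNReal.ofReal (energySum γ r) ≤ ⨆ n, ENNReal.ofReal (energySum γ (dyadicPartition n)) := by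
  obtain ⟨hmono, h0, h1⟩ := hr
  have hr01 : ∀ j, r j ∈ Icc (0 : ℝ) 1 := fun j =>
    ⟨h0 ▸ hmono.monotone (Fin.zero_le j), h1 ▸ hmono.monotone (Fin.le_last j)⟩
  -- round the points of `r` up to the dyadic grid of mesh `2⁻ⁿ`
  set k : ℕ → Fin (m + 2) → ℕ := fun n j => ⌈r j * 2 ^ n⌉₊
  set R : ℕ → Fin (m + 2) → ℝ := fun n j => (k n j : ℝ) / 2 ^ n
  have hR : ∀ j, Tendsto (fun n => R n j) atTop (𝓝 (r j)) := fun j =>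
    (tendsto_nat_ceil_mul_div_atTop (hr01 j).1).comp
      (tendsto_pow_atTop_atTop_of_one_lt one_lt_two)
  have hRmem : ∀ n j, R n j ∈ Icc (0 : ℝ) 1 := fun n j => by
    refine ⟨by positivity, (div_le_one (by positivity)).2 ?_⟩
    have h2n : (0 : ℝ) < 2 ^ n := by positivity
    exact_mod_cast Nat.ceil_le.2 (by push_cast; nlinarith [(hr01 j).2])
  have hRmono : ∀ᶠ n in atTop, StrictMono (R n) := by
    simp only [Fin.strictMono_iff_lt_succ]
    exact eventually_all.2 fun j => (hR _).eventually_lt (hR _) (hmono j.castSucc_lt_succ)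
  refine le_of_tendsto ((ENNReal.continuous_ofReal.tendsto _).comp
    (tendsto_energySum hγ hmono hr01 hR hRmem)) ?_
  filter_upwards [hRmono] with n hn
  refine le_iSup_of_le n (ENNReal.ofReal_le_ofReal ?_)
  refine energySum_comp_le γ (strictMono_div_two_pow n)
    (fun i j hij => (strictMono_div_two_pow n).lt_iff_lt.1 (hn hij)) (by simp [k, h0]) ?_
  simp only [k, h1, one_mul, two_pow_sub_one_add_one]
  exact_mod_cast Nat.ceil_natCast (2 ^ n)

theorem energy_eq_iSup_dyadicPartition {γ : ℝ → X} (hγ : ContinuousOn γ (Icc 0 1)) :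
    energy γ = ⨆ n, ENNReal.ofReal (energySum γ (dyadicPartition n)) :=
  le_antisymm
    (iSup_le fun _ => iSup₂_le fun _ hr => ofReal_energySum_le_iSup_dyadicPartition hγ hr)
    (iSup_le fun n => le_iSup₂_of_le (2 ^ n - 1) (dyadicPartition n)
      (le_iSup_of_le (isPartition_dyadicPartition n) le_rfl))

end Approximation

section Action

theorem measurable_energySum {m : ℕ} (r : Fin (m + 2) → ℝ) :
    Measurable fun γ : ℝ → ℝ => energySum γ r := by
  unfold energySum
  fun_prop

theorem integrable_sq_of_lintegral_ne_top {μ : Measure ℝ}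
    (h : ∫⁻ x, ENNReal.ofReal (x ^ 2) ∂μ ≠ ⊤) : Integrable (fun x => x ^ 2) μ :=
  ⟨by fun_prop, by
    rw [hasFiniteIntegral_iff_ofReal (ae_of_all _ fun x => sq_nonneg x)]
    exact h.lt_top⟩

theorem lintegral_dist_sq_eq_W2sq {Ω : Type*} [MeasurableSpace Ω] {Γ : Measure Ω}
    {X Y : Ω → ℝ} (hX : Measurable X) (hY : Measurable Y) {μ ν : Measure ℝ}
    [IsProbabilityMeasure μ] [IsProbabilityMeasure ν] (hμ : Integrable (fun x => x ^ 2) μ)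
    (hν : Integrable (fun y => y ^ 2) ν)
    (hΓ : Γ.map (fun ω => (X ω, Y ω)) = quantileCoupling μ ν) :
    ∫⁻ ω, ENNReal.ofReal (dist (X ω) (Y ω) ^ 2) ∂Γ = W2sq μ ν := by
  rw [W2sq_eq_transportCost_quantileCoupling hμ hν, transportCost, ← hΓ,
    lintegral_map (by fun_prop) (hX.prodMk hY)]
  simp only [Real.dist_eq, Real.norm_eq_abs, abs_sub_comm]

theorem lintegral_ofReal_energySum {μ : ℝ → Measure ℝ}
    [∀ t, IsProbabilityMeasure (μ t)] (hμ2 : ∀ t, Integrable (fun x => x ^ 2) (μ t))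
    {Γ : Measure (ℝ → ℝ)}
    (hq : ∀ s t : ℝ, 0 ≤ s → s < t → t ≤ 1 →
      Γ.map (fun γ => (γ s, γ t)) = quantileCoupling (μ s) (μ t))
    {m : ℕ} {r : Fin (m + 2) → ℝ} (hr : IsPartition r) :
    ∫⁻ γ, ENNReal.ofReal (energySum γ r) ∂Γ
      = ∑ k : Fin (m + 1),
          W2sq (μ (r k.castSucc)) (μ (r k.succ)) / ENNReal.ofReal (r k.succ - r k.castSucc) := by
  obtain ⟨hmono, h0, h1⟩ := hr
  have hgap : ∀ k : Fin (m + 1), 0 < r k.succ - r k.castSucc := fun k =>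
    sub_pos.2 (hmono k.castSucc_lt_succ)
  have hsplit : ∀ γ : ℝ → ℝ, ENNReal.ofReal (energySum γ r)
      = ∑ k : Fin (m + 1), ENNReal.ofReal (dist (γ (r k.castSucc)) (γ (r k.succ)) ^ 2)
          / ENNReal.ofReal (r k.succ - r k.castSucc) := fun γ => by
    rw [energySum, ENNReal.ofReal_sum_of_nonneg fun k _ => by have := hgap k; positivity]
    exact Finset.sum_congr rfl fun k _ => ENNReal.ofReal_div_of_pos (hgap k)
  simp only [hsplit]
  rw [lintegral_finsetSum _ fun k _ => by fun_prop]
  refine Finset.sum_congr rfl fun k _ => ?_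
  simp only [div_eq_mul_inv]
  rw [lintegral_mul_const _ (by fun_prop), lintegral_dist_sq_eq_W2sq (measurable_pi_apply _)
    (measurable_pi_apply _) (hμ2 _) (hμ2 _) (hq _ _ ?_ (hmono k.castSucc_lt_succ) ?_)]
  · exact h0 ▸ hmono.monotone (Fin.zero_le _)
  · exact h1 ▸ hmono.monotone (Fin.le_last _)

end Action

theorem stmt_14_general (μ : ℝ → Measure ℝ)
    (hμprob : ∀ t, IsProbabilityMeasure (μ t))
    (hμ2 : ∀ t, ∫⁻ x, ENNReal.ofReal (x ^ 2) ∂(μ t) ≠ ⊤)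
    (Γ : Measure (ℝ → ℝ))
    (hcont : ∀ᵐ γ ∂Γ, ContinuousOn γ (Icc (0 : ℝ) 1))
    (hq : ∀ s t : ℝ, 0 ≤ s → s < t → t ≤ 1 →
      Γ.map (fun γ => (γ s, γ t)) = quantileCoupling (μ s) (μ t)) :
    ∫⁻ γ, energy γ ∂Γ = energyW2 μ := by
  have hμ2' := fun t => integrable_sq_of_lintegral_ne_top (hμ2 t)
  refine le_antisymm ?_ (iSup_le fun m => iSup₂_le fun r hr => ?_)
  · calc ∫⁻ γ, energy γ ∂Γ
        = ∫⁻ γ, ⨆ n, ENNReal.ofReal (energySum γ (dyadicPartition n)) ∂Γ :=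
          lintegral_congr_ae (hcont.mono fun γ hγ => energy_eq_iSup_dyadicPartition hγ)
      _ = ⨆ n, ∫⁻ γ, ENNReal.ofReal (energySum γ (dyadicPartition n)) ∂Γ :=
          lintegral_iSup (fun n => (measurable_energySum _).ennreal_ofReal)
            fun _ _ h γ => ENNReal.ofReal_le_ofReal (monotone_energySum_dyadicPartition γ h)
      _ ≤ energyW2 μ := iSup_le fun n => by
          rw [lintegral_ofReal_energySum hμ2' hq (isPartition_dyadicPartition n)]
          exact le_iSup₂_of_le _ _ (le_iSup_of_le (isPartition_dyadicPartition n) le_rfl)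
  · rw [← lintegral_ofReal_energySum hμ2' hq hr]
    exact lintegral_mono fun γ => le_iSup₂_of_le m r (le_iSup_of_le hr le_rfl)

/-- If `Γ` is a law on `C([0,1], ℝ)` with time marginals `μ t ∈ P₂(ℝ)` whose
two-dimensional marginals are all quantile couplings, then its action equals the
Wasserstein energy of the marginal curve: `A(Γ) = E(μ)`. -/
theorem stmt_14 (μ : ℝ → Measure ℝ)
    (hμprob : ∀ t, IsProbabilityMeasure (μ t))
    (hμ2 : ∀ t, ∫⁻ x, ENNReal.ofReal (x ^ 2) ∂(μ t) ≠ ⊤)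
    (Γ : Measure (ℝ → ℝ)) [IsProbabilityMeasure Γ]
    (hcont : ∀ᵐ γ ∂Γ, ContinuousOn γ (Icc (0 : ℝ) 1))
    (hmarg : ∀ t ∈ Icc (0 : ℝ) 1, Γ.map (fun γ => γ t) = μ t)
    (hq : ∀ s t : ℝ, 0 ≤ s → s < t → t ≤ 1 →
      Γ.map (fun γ => (γ s, γ t)) = quantileCoupling (μ s) (μ t)) :
    ∫⁻ γ, energy γ ∂Γ = energyW2 μ :=
  stmt_14_general μ hμprob hμ2 Γ hcont hq
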